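/- arXiv:1302.0592 — 10 statements merged into one kernel-verified Lean document; each statement's English description precedes it below -/
import Mathlib

section
/- Let n and k be natural numbers with k ≤ n, and let u, v : ℝ → ℝ be n times continuously differentiable. Then for every x ∈ ℝ, ∑_{i=0}^{n} i^k · C(n,i) · u^{(i)}(x) · v^{(n−i)}(x) = ∑_{i=0}^{k} ( ∑_{s=0}^{i} (−1)^{s+i} · s^k / (s! · (i−s)!) ) · C(n,i) · i! · (u^{(i)}·v)^{(n−i)}(x), with the convention 0⁰ = 1. -/
/-!
Newton's forward-difference formula for `r ↦ r ^ k` at `0` gives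
`m ^ k = ∑_{i ≤ k} c_{k,i} · i! · C(m,i)`, where `c_{k,i}` is the inner sum of the statement
(a Stirling number of the second kind). Substituting this for `i ^ k` on the left and exchanging
the sums, the coefficient of `c_{k,i} · i!` is `∑_m C(n,m) C(m,i) u⁽ᵐ⁾ v⁽ⁿ⁻ᵐ⁾`, which by Leibniz's
rule and `C(n,m) C(m,i) = C(n,i) C(n-i,m-i)` equals `C(n,i) (u⁽ⁱ⁾ v)⁽ⁿ⁻ⁱ⁾`.
-/

open Finset Nat Function
open scoped fwdDiff

section NewtonSeries

variable {K : Type*} [Field K] [CharZero K]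

lemma fwdDiff_iter_pow_apply_zero (k i : ℕ) :
    (Δ_[(1 : K)])^[i] (fun r : K ↦ r ^ k) 0
      = (i ! : K) * ∑ s ∈ range (i + 1),
          (-1 : K) ^ (s + i) * (s : K) ^ k / ((s ! : K) * ((i - s)! : K)) := by
  rw [fwdDiff_iter_eq_sum_shift, mul_sum]
  refine sum_congr rfl fun s hs ↦ ?_
  have hsi : s ≤ i := Nat.lt_succ_iff.mp (mem_range.mp hs)
  have hsign : (-1 : K) ^ (s + i) = (-1) ^ (i - s) := by
    rw [show s + i = (i - s) + 2 * s by omega, pow_add, pow_mul]; simp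
  rw [zsmul_eq_mul, hsign, nsmul_eq_mul, mul_one, zero_add]
  push_cast
  rw [Nat.cast_choose K hsi]
  field_simp

theorem natCast_pow_eq_sum_factorial_mul_choose (k m : ℕ) :
    (m : K) ^ k = ∑ i ∈ range (k + 1),
      (∑ s ∈ range (i + 1), (-1 : K) ^ (s + i) * (s : K) ^ k / ((s ! : K) * ((i - s)! : K)))
        * (i ! : K) * (m.choose i : K) := by
  have hnewton := shift_eq_sum_fwdDiff_iter (1 : K) (fun r : K ↦ r ^ k) m 0
  simp only [nsmul_eq_mul, mul_one, zero_add] at hnewton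
  have hvanish : ∀ i ∈ range (m + k + 1), i ∉ range (k + 1) →
      (m.choose i : K) * (Δ_[(1 : K)])^[i] (fun r : K ↦ r ^ k) 0 = 0 := fun i _ hi ↦ by
    rw [fwdDiff_iter_pow_eq_zero_of_lt (by simpa using hi), Pi.zero_apply, mul_zero]
  have hchoose : ∀ i ∈ range (m + k + 1), i ∉ range (m + 1) →
      (m.choose i : K) * (Δ_[(1 : K)])^[i] (fun r : K ↦ r ^ k) 0 = 0 := fun i _ hi ↦ by
    rw [Nat.choose_eq_zero_of_lt (by simpa using hi), Nat.cast_zero, zero_mul]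
  rw [hnewton, sum_subset (range_subset_range.mpr (by omega)) hchoose,
    ← sum_subset (range_subset_range.mpr (by omega)) hvanish]
  refine sum_congr rfl fun i _ ↦ ?_
  rw [fwdDiff_iter_pow_apply_zero]
  ring

end NewtonSeries

section Leibniz

variable {𝕜 : Type*} [NontriviallyNormedField 𝕜] {𝔸 : Type*} [NormedCommRing 𝔸] [NormedAlgebra 𝕜 𝔸]

lemma iteratedDeriv_iteratedDeriv {F : Type*} [NormedAddCommGroup F] [NormedSpace 𝕜 F]
    (i j : ℕ) (f : 𝕜 → F) :
    iteratedDeriv j (iteratedDeriv i f) = iteratedDeriv (i + j) f := by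
  simp only [iteratedDeriv_eq_iterate, add_comm i j, iterate_add_apply]

lemma choose_mul_iteratedDeriv_iteratedDeriv_mul {n : ℕ} {u v : 𝕜 → 𝔸}
    (hu : ContDiff 𝕜 n u) (hv : ContDiff 𝕜 n v) (i : ℕ) (x : 𝕜) :
    (n.choose i : 𝔸) * iteratedDeriv (n - i) (fun y ↦ iteratedDeriv i u y * v y) x
      = ∑ m ∈ range (n + 1), (n.choose m : 𝔸) * (m.choose i : 𝔸)
          * iteratedDeriv m u x * iteratedDeriv (n - m) v x := by
  rcases lt_or_ge n i with hni | hin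
  · rw [Nat.choose_eq_zero_of_lt hni, Nat.cast_zero, zero_mul]
    refine (sum_eq_zero fun m hm ↦ ?_).symm
    rw [Nat.choose_eq_zero_of_lt (n := m) (by simp at hm; omega)]
    simp
  have hui : ContDiff 𝕜 (n - i : ℕ) (iteratedDeriv i u) := by
    rw [iteratedDeriv_eq_iterate]
    exact ContDiff.iterate_deriv' _ i (by rwa [Nat.sub_add_cancel hin])
  have hvi : ContDiff 𝕜 (n - i : ℕ) v := hv.of_le (by exact_mod_cast Nat.sub_le n i)
  have hlow : ∑ m ∈ range i, (n.choose m : 𝔸) * (m.choose i : 𝔸)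
      * iteratedDeriv m u x * iteratedDeriv (n - m) v x = 0 :=
    sum_eq_zero fun m hm ↦ by rw [Nat.choose_eq_zero_of_lt (mem_range.mp hm)]; simp
  rw [iteratedDeriv_fun_mul hui.contDiffAt hvi.contDiffAt, mul_sum,
    ← sum_range_add_sum_Ico _ (by omega : i ≤ n + 1), hlow, zero_add, sum_Ico_eq_sum_range,
    show n + 1 - i = n - i + 1 by omega]
  refine sum_congr rfl fun j hj ↦ ?_
  have hchoose : (n.choose (i + j) : 𝔸) * ((i + j).choose i : 𝔸)
      = (n.choose i : 𝔸) * ((n - i).choose j : 𝔸) := by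
    rw [← Nat.cast_mul, Nat.choose_mul (Nat.le_add_right i j), Nat.add_sub_cancel_left,
      Nat.cast_mul]
  rw [iteratedDeriv_iteratedDeriv, Nat.sub_sub]
  linear_combination (iteratedDeriv (i + j) u x * iteratedDeriv (n - (i + j)) v x) * hchoose.symm

end Leibniz

theorem statement2_general (n k : ℕ) (u v : ℝ → ℝ)
    (hu : ContDiff ℝ n u) (hv : ContDiff ℝ n v) (x : ℝ) :
    ∑ i ∈ Finset.range (n + 1),
        (i : ℝ) ^ k * (n.choose i : ℝ) * iteratedDeriv i u x * iteratedDeriv (n - i) v x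
      = ∑ i ∈ Finset.range (k + 1),
          (∑ s ∈ Finset.range (i + 1),
              (-1 : ℝ) ^ (s + i) * (s : ℝ) ^ k
                / ((s.factorial : ℝ) * ((i - s).factorial : ℝ))) *
            (n.choose i : ℝ) * (i.factorial : ℝ) *
            iteratedDeriv (n - i) (fun y => iteratedDeriv i u y * v y) x := by
  calc _ = ∑ m ∈ range (n + 1), ∑ i ∈ range (k + 1),
        (∑ s ∈ range (i + 1), (-1 : ℝ) ^ (s + i) * (s : ℝ) ^ k / ((s ! : ℝ) * ((i - s)! : ℝ)))
          * (i ! : ℝ) * ((n.choose m : ℝ) * (m.choose i : ℝ)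
            * iteratedDeriv m u x * iteratedDeriv (n - m) v x) := by
        refine sum_congr rfl fun m _ ↦ ?_
        rw [natCast_pow_eq_sum_factorial_mul_choose k m, sum_mul, sum_mul, sum_mul]
        refine sum_congr rfl fun i _ ↦ ?_
        ring
    _ = _ := by
        rw [sum_comm]
        refine sum_congr rfl fun i _ ↦ ?_
        rw [← mul_sum, ← choose_mul_iteratedDeriv_iteratedDeriv_mul hu hv]
        ring

/-- For naturals `k ≤ n` and `u, v : ℝ → ℝ` that are `n` times continuously differentiable,
`∑_{i=0}^{n} iᵏ · C(n,i) · u⁽ⁱ⁾(x) · v⁽ⁿ⁻ⁱ⁾(x)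
  = ∑_{i=0}^{k} (∑_{s=0}^{i} (−1)^{s+i} sᵏ/(s!(i−s)!)) · C(n,i) · i! · (u⁽ⁱ⁾·v)⁽ⁿ⁻ⁱ⁾(x)`,
with the convention `0⁰ = 1`. -/
theorem statement2 (n k : ℕ) (hkn : k ≤ n) (u v : ℝ → ℝ)
    (hu : ContDiff ℝ n u) (hv : ContDiff ℝ n v) (x : ℝ) :
    ∑ i ∈ Finset.range (n + 1),
        (i : ℝ) ^ k * (n.choose i : ℝ) * iteratedDeriv i u x * iteratedDeriv (n - i) v x
      = ∑ i ∈ Finset.range (k + 1),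
          (∑ s ∈ Finset.range (i + 1),
              (-1 : ℝ) ^ (s + i) * (s : ℝ) ^ k
                / ((s.factorial : ℝ) * ((i - s).factorial : ℝ))) *
            (n.choose i : ℝ) * (i.factorial : ℝ) *
            iteratedDeriv (n - i) (fun y => iteratedDeriv i u y * v y) x :=
  statement2_general n k u v hu hv x
end

section
/- Let y₁, y₂ : ℝ → ℝ be smooth solutions of y″ = a₁·y′ + a₂·y. Then for every natural number n and every x ∈ ℝ at which the Wronskian W(x) := y₁(x)·y₂′(x) − y₁′(x)·y₂(x) is nonzero, one has α(n)(x) = (y₁(x)·y₂^{(n+2)}(x) − y₂(x)·y₁^{(n+2)}(x)) / W(x) and β(n)(x) = (y₁^{(n+2)}(x)·y₂′(x) − y₁′(x)·y₂^{(n+2)}(x)) / W(x). -/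
/-!
Differentiating `y⁽ⁿ⁺²⁾ = α(n)·y′ + β(n)·y` and replacing `y″` by `a₁·y′ + a₂·y` reproduces exactly
the recursion defining `(α(n+1), β(n+1))`. Hence, for two solutions, `(α(n)(x), β(n)(x))` solves a
2×2 linear system whose determinant is the Wronskian, and Cramer's rule gives the formulas.
-/

/-- The `n`-image coefficients `(α(n), β(n))` of the ODE `y″ = a₁·y′ + a₂·y`:
`α(0) = a₁`, `β(0) = a₂`, `α(n+1) = (α(n))′ + a₁·α(n) + β(n)`,
`β(n+1) = a₂·α(n) + (β(n))′`. -/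
noncomputable def nImage (a₁ a₂ : ℝ → ℝ) : ℕ → (ℝ → ℝ) × (ℝ → ℝ)
  | 0 => (a₁, a₂)
  | n + 1 =>
      (fun x => deriv (nImage a₁ a₂ n).1 x + a₁ x * (nImage a₁ a₂ n).1 x + (nImage a₁ a₂ n).2 x,
       fun x => a₂ x * (nImage a₁ a₂ n).1 x + deriv (nImage a₁ a₂ n).2 x)

open scoped ContDiff

theorem cramer_two {K : Type*} [Field K] {α β u u' v v' p q : K}
    (hp : p = α * u' + β * u) (hq : q = α * v' + β * v) (hW : u * v' - u' * v ≠ 0) :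
    α = (u * q - v * p) / (u * v' - u' * v) ∧ β = (p * v' - u' * q) / (u * v' - u' * v) := by
  subst hp hq
  constructor <;> rw [eq_div_iff hW] <;> ring

section nImage

variable {a₁ a₂ : ℝ → ℝ}

theorem contDiff_nImage (ha₁ : ContDiff ℝ ∞ a₁) (ha₂ : ContDiff ℝ ∞ a₂) (n : ℕ) :
    ContDiff ℝ ∞ (nImage a₁ a₂ n).1 ∧ ContDiff ℝ ∞ (nImage a₁ a₂ n).2 := by
  induction n with
  | zero => exact ⟨ha₁, ha₂⟩
  | succ n ih =>
    obtain ⟨hα, hβ⟩ := ih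
    exact ⟨((contDiff_infty_iff_deriv.mp hα).2.add (ha₁.mul hα)).add hβ,
      (ha₂.mul hα).add (contDiff_infty_iff_deriv.mp hβ).2⟩

theorem iteratedDeriv_add_two_eq_nImage (ha₁ : ContDiff ℝ ∞ a₁) (ha₂ : ContDiff ℝ ∞ a₂)
    {y : ℝ → ℝ} (hy : ContDiff ℝ ∞ y)
    (hode : ∀ x, iteratedDeriv 2 y x = a₁ x * deriv y x + a₂ x * y x) (n : ℕ) :
    iteratedDeriv (n + 2) y =
      fun x => (nImage a₁ a₂ n).1 x * deriv y x + (nImage a₁ a₂ n).2 x * y x := by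
  induction n with
  | zero => exact funext hode
  | succ n ih =>
    ext x
    obtain ⟨hα, hβ⟩ := contDiff_nImage ha₁ ha₂ n
    have hdy : ContDiff ℝ ∞ (deriv y) := (contDiff_infty_iff_deriv.mp hy).2
    have hy'' : deriv (deriv y) x = a₁ x * deriv y x + a₂ x * y x := by
      rw [← hode, iteratedDeriv_succ, iteratedDeriv_one]
    have hderiv := ((hα.differentiable (by simp) x).hasDerivAt.fun_mul
      (hdy.differentiable (by simp) x).hasDerivAt).fun_add
      ((hβ.differentiable (by simp) x).hasDerivAt.fun_mul
        (hy.differentiable (by simp) x).hasDerivAt)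
    rw [show n + 1 + 2 = n + 2 + 1 by rfl, iteratedDeriv_succ, ih, hderiv.deriv, hy'']
    simp only [nImage]
    ring

end nImage

/-- If `y₁, y₂` are smooth solutions of `y″ = a₁·y′ + a₂·y`, then at every point `x` where the
Wronskian `W(x) = y₁(x)·y₂′(x) − y₁′(x)·y₂(x)` is nonzero,
`α(n)(x) = (y₁·y₂⁽ⁿ⁺²⁾ − y₂·y₁⁽ⁿ⁺²⁾)(x)/W(x)` and
`β(n)(x) = (y₁⁽ⁿ⁺²⁾·y₂′ − y₁′·y₂⁽ⁿ⁺²⁾)(x)/W(x)`. -/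
theorem statement5 (a₁ a₂ : ℝ → ℝ)
    (ha₁ : ContDiff ℝ (⊤ : ℕ∞) a₁) (ha₂ : ContDiff ℝ (⊤ : ℕ∞) a₂)
    (y₁ y₂ : ℝ → ℝ) (hy₁ : ContDiff ℝ (⊤ : ℕ∞) y₁) (hy₂ : ContDiff ℝ (⊤ : ℕ∞) y₂)
    (hode₁ : ∀ x : ℝ, iteratedDeriv 2 y₁ x = a₁ x * deriv y₁ x + a₂ x * y₁ x)
    (hode₂ : ∀ x : ℝ, iteratedDeriv 2 y₂ x = a₁ x * deriv y₂ x + a₂ x * y₂ x)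
    (n : ℕ) (x : ℝ)
    (hW : y₁ x * deriv y₂ x - deriv y₁ x * y₂ x ≠ 0) :
    (nImage a₁ a₂ n).1 x
        = (y₁ x * iteratedDeriv (n + 2) y₂ x - y₂ x * iteratedDeriv (n + 2) y₁ x)
            / (y₁ x * deriv y₂ x - deriv y₁ x * y₂ x)
      ∧ (nImage a₁ a₂ n).2 x
        = (iteratedDeriv (n + 2) y₁ x * deriv y₂ x - deriv y₁ x * iteratedDeriv (n + 2) y₂ x)
            / (y₁ x * deriv y₂ x - deriv y₁ x * y₂ x) :=
  cramer_two (congrFun (iteratedDeriv_add_two_eq_nImage ha₁ ha₂ hy₁ hode₁ n) x)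
    (congrFun (iteratedDeriv_add_two_eq_nImage ha₁ ha₂ hy₂ hode₂ n) x) hW
end

section
/- Let a₁ : ℝ → ℝ be differentiable, let a₂ : ℝ → ℝ, and let α, β : ℕ → (ℝ → ℝ) be families of functions with each α(n) twice differentiable and each β(n) differentiable, satisfying α(n+1) = (α(n))′ + a₁·α(n) + β(n) and β(n+1) = a₂·α(n) + (β(n))′ for every natural number n. Then for every n and every x ∈ ℝ, α(n+2)(x) = α(n)(x)·(a₂(x) − a₁′(x)) + 2·(α(n+1))′(x) + α(n+1)(x)·a₁(x) − (α(n))′(x)·a₁(x) − (α(n))″(x). -/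
section DerivAddMulAdd

variable {𝕜 : Type*} [NontriviallyNormedField 𝕜] {f g a b : 𝕜 → 𝕜}

theorem differentiable_deriv_of_eq_deriv_add_mul_add
    (hrec : ∀ y, f y = deriv g y + a y * g y + b y) (hf : Differentiable 𝕜 f)
    (ha : Differentiable 𝕜 a) (hg : Differentiable 𝕜 g) (hb : Differentiable 𝕜 b) :
    Differentiable 𝕜 (deriv g) := by
  have h : deriv g = fun y => f y - a y * g y - b y := by
    funext y
    rw [hrec]
    ring
  rw [h]
  exact (hf.sub (ha.mul hg)).sub hb

theorem deriv_of_eq_deriv_add_mul_add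
    (hrec : ∀ y, f y = deriv g y + a y * g y + b y) (hf : Differentiable 𝕜 f)
    (ha : Differentiable 𝕜 a) (hg : Differentiable 𝕜 g) (hb : Differentiable 𝕜 b) (x : 𝕜) :
    deriv f x = deriv (deriv g) x + (deriv a x * g x + a x * deriv g x) + deriv b x := by
  have hg' := differentiable_deriv_of_eq_deriv_add_mul_add hrec hf ha hg hb
  have hasDeriv : HasDerivAt f
      (deriv (deriv g) x + (deriv a x * g x + a x * deriv g x) + deriv b x) x := by
    rw [show f = fun y => deriv g y + a y * g y + b y from funext hrec]
    exact ((hg' x).hasDerivAt.add ((ha x).hasDerivAt.mul (hg x).hasDerivAt)).add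
      (hb x).hasDerivAt
  exact hasDeriv.deriv

end DerivAddMulAdd

theorem statement6_general (a₁ a₂ : ℝ → ℝ) (ha₁ : Differentiable ℝ a₁)
    (α β : ℕ → ℝ → ℝ)
    (hα : ∀ n, Differentiable ℝ (α n))
    (hβ : ∀ n, Differentiable ℝ (β n))
    (hrecα : ∀ n, ∀ x : ℝ, α (n + 1) x = deriv (α n) x + a₁ x * α n x + β n x)
    (hrecβ : ∀ n, ∀ x : ℝ, β (n + 1) x = a₂ x * α n x + deriv (β n) x)
    (n : ℕ) (x : ℝ) :
    α (n + 2) x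
      = α n x * (a₂ x - deriv a₁ x) + 2 * deriv (α (n + 1)) x + α (n + 1) x * a₁ x
        - deriv (α n) x * a₁ x - deriv (deriv (α n)) x := by
  have hderiv := deriv_of_eq_deriv_add_mul_add (hrecα n) (hα (n + 1)) ha₁ (hα n) (hβ n) x
  rw [hrecα (n + 1) x, hrecβ n x]
  linarith

/-- If `a₁` is differentiable and families `α, β : ℕ → (ℝ → ℝ)` (with each `α(n)` twice
differentiable and each `β(n)` differentiable) satisfy
`α(n+1) = (α(n))′ + a₁·α(n) + β(n)` and `β(n+1) = a₂·α(n) + (β(n))′`, then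
`α(n+2) = α(n)·(a₂ − a₁′) + 2(α(n+1))′ + α(n+1)·a₁ − (α(n))′·a₁ − (α(n))″`. -/
theorem statement6 (a₁ a₂ : ℝ → ℝ) (ha₁ : Differentiable ℝ a₁)
    (α β : ℕ → ℝ → ℝ)
    (hα : ∀ n, Differentiable ℝ (α n)) (hα' : ∀ n, Differentiable ℝ (deriv (α n)))
    (hβ : ∀ n, Differentiable ℝ (β n))
    (hrecα : ∀ n, ∀ x : ℝ, α (n + 1) x = deriv (α n) x + a₁ x * α n x + β n x)
    (hrecβ : ∀ n, ∀ x : ℝ, β (n + 1) x = a₂ x * α n x + deriv (β n) x)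
    (n : ℕ) (x : ℝ) :
    α (n + 2) x
      = α n x * (a₂ x - deriv a₁ x) + 2 * deriv (α (n + 1)) x + α (n + 1) x * a₁ x
        - deriv (α n) x * a₁ x - deriv (deriv (α n)) x :=
  statement6_general a₁ a₂ ha₁ α β hα hβ hrecα hrecβ n x
end

section
/- Let a₁ : ℝ → ℝ be differentiable and a₂ : ℝ → ℝ; put b₁ := −a₁ and b₂ := a₂ − a₁′. Let y₁ : ℝ → ℝ be twice differentiable with y₁″ = a₁·y₁′ + a₂·y₁, and put ε₋₁ := 1 + y₁. Suppose ε₋₂ : ℝ → ℝ is twice differentiable and satisfies, for all x ∈ ℝ, b₁(x) = ε₋₂(x)·(b₂(x) − b₁′(x)) + 2·ε₋₁′(x) + ε₋₁(x)·b₁(x) − ε₋₂′(x)·b₁(x) − ε₋₂″(x). Then the function y₂ defined by y₂(x) := ε₋₂(x) − x·ε₋₁(x) + x satisfies y₂″(x) = a₁(x)·y₂′(x) + a₂(x)·y₂(x) for all x ∈ ℝ. -/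
/-! With `L y := y″ − a₁ y′ − a₂ y`, the hypothesis on `ε₋₂` says exactly
`L ε₋₂ = 2 y₁′ − a₁ y₁`, since `b₂ − b₁′ = a₂`.  As `L y₁ = 0`, also `L (x y₁) = 2 y₁′ − a₁ y₁`,
and `y₂ = ε₋₂ − x y₁` because `ε₋₁ = 1 + y₁`; linearity of `L` gives `L y₂ = 0`. -/

section SecondDerivative

variable {f g : ℝ → ℝ}

theorem deriv_id_mul (hf : Differentiable ℝ f) :
    deriv (fun t => t * f t) = fun x => f x + x * deriv f x := by
  funext x
  simpa using ((hasDerivAt_id' x).fun_mul (hf x).hasDerivAt).deriv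

theorem differentiable_deriv_id_mul (hf : Differentiable ℝ f) (hf' : Differentiable ℝ (deriv f)) :
    Differentiable ℝ (deriv fun t => t * f t) := by
  rw [deriv_id_mul hf]
  fun_prop

theorem deriv_deriv_id_mul (hf : Differentiable ℝ f) (hf' : Differentiable ℝ (deriv f)) (x : ℝ) :
    deriv (deriv fun t => t * f t) x = 2 * deriv f x + x * deriv (deriv f) x := by
  rw [deriv_id_mul hf, deriv_fun_add (hf x) (by fun_prop), congrFun (deriv_id_mul hf') x]
  ring

theorem deriv_deriv_sub (hf : Differentiable ℝ f) (hf' : Differentiable ℝ (deriv f))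
    (hg : Differentiable ℝ g) (hg' : Differentiable ℝ (deriv g)) (x : ℝ) :
    deriv (deriv fun t => f t - g t) x = deriv (deriv f) x - deriv (deriv g) x := by
  have hsub : deriv (fun t => f t - g t) = fun t => deriv f t - deriv g t := by
    funext t
    exact deriv_fun_sub (hf t) (hg t)
  rw [hsub, deriv_fun_sub (hf' x) (hg' x)]

end SecondDerivative

theorem statement8_general (a₁ a₂ : ℝ → ℝ)
    (b₁ b₂ : ℝ → ℝ)
    (hb₁ : b₁ = fun x => -a₁ x) (hb₂ : b₂ = fun x => a₂ x - deriv a₁ x)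
    (y₁ : ℝ → ℝ) (hy₁ : Differentiable ℝ y₁) (hy₁' : Differentiable ℝ (deriv y₁))
    (hode₁ : ∀ x : ℝ, deriv (deriv y₁) x = a₁ x * deriv y₁ x + a₂ x * y₁ x)
    (ε₁ : ℝ → ℝ) (hε₁ : ε₁ = fun x => 1 + y₁ x)
    (ε₂ : ℝ → ℝ) (hε₂ : Differentiable ℝ ε₂) (hε₂' : Differentiable ℝ (deriv ε₂))
    (hrec : ∀ x : ℝ, b₁ x
        = ε₂ x * (b₂ x - deriv b₁ x) + 2 * deriv ε₁ x + ε₁ x * b₁ x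
          - deriv ε₂ x * b₁ x - deriv (deriv ε₂) x) :
    ∀ x : ℝ, deriv (deriv (fun t => ε₂ t - t * ε₁ t + t)) x
      = a₁ x * deriv (fun t => ε₂ t - t * ε₁ t + t) x + a₂ x * (ε₂ x - x * ε₁ x + x) := by
  subst hb₁ hb₂ hε₁
  intro x
  have hε₂_ode : deriv (deriv ε₂) x
      = a₁ x * deriv ε₂ x + a₂ x * ε₂ x + 2 * deriv y₁ x - a₁ x * y₁ x := by
    have h := hrec x
    simp only [deriv.fun_neg, deriv_const_add] at h
    linarith
  have hy₂ : (fun t => ε₂ t - t * (1 + y₁ t) + t) = fun t => ε₂ t - t * y₁ t := by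
    funext t
    ring
  have hxy₁ : Differentiable ℝ fun t => t * y₁ t := by fun_prop
  rw [hy₂, deriv_deriv_sub hε₂ hε₂' hxy₁ (differentiable_deriv_id_mul hy₁ hy₁'),
    deriv_fun_sub (hε₂ x) (hxy₁ x), deriv_deriv_id_mul hy₁ hy₁', deriv_id_mul hy₁,
    hε₂_ode, hode₁ x]
  ring

/-- Let `a₁` be differentiable, `b₁ := −a₁`, `b₂ := a₂ − a₁′`.  Let `y₁` be a twice
differentiable solution of `y₁″ = a₁·y₁′ + a₂·y₁` and put `ε₋₁ := 1 + y₁`.  If a twice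
differentiable `ε₋₂` satisfies
`b₁ = ε₋₂·(b₂ − b₁′) + 2ε₋₁′ + ε₋₁·b₁ − ε₋₂′·b₁ − ε₋₂″`, then
`y₂(x) := ε₋₂(x) − x·ε₋₁(x) + x` satisfies `y₂″ = a₁·y₂′ + a₂·y₂`. -/
theorem statement8 (a₁ a₂ : ℝ → ℝ) (ha₁ : Differentiable ℝ a₁)
    (b₁ b₂ : ℝ → ℝ)
    (hb₁ : b₁ = fun x => -a₁ x) (hb₂ : b₂ = fun x => a₂ x - deriv a₁ x)
    (y₁ : ℝ → ℝ) (hy₁ : Differentiable ℝ y₁) (hy₁' : Differentiable ℝ (deriv y₁))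
    (hode₁ : ∀ x : ℝ, deriv (deriv y₁) x = a₁ x * deriv y₁ x + a₂ x * y₁ x)
    (ε₁ : ℝ → ℝ) (hε₁ : ε₁ = fun x => 1 + y₁ x)
    (ε₂ : ℝ → ℝ) (hε₂ : Differentiable ℝ ε₂) (hε₂' : Differentiable ℝ (deriv ε₂))
    (hrec : ∀ x : ℝ, b₁ x
        = ε₂ x * (b₂ x - deriv b₁ x) + 2 * deriv ε₁ x + ε₁ x * b₁ x
          - deriv ε₂ x * b₁ x - deriv (deriv ε₂) x) :
    ∀ x : ℝ, deriv (deriv (fun t => ε₂ t - t * ε₁ t + t)) x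
      = a₁ x * deriv (fun t => ε₂ t - t * ε₁ t + t) x + a₂ x * (ε₂ x - x * ε₁ x + x) :=
  statement8_general a₁ a₂ b₁ b₂ hb₁ hb₂ y₁ hy₁ hy₁' hode₁ ε₁ hε₁ ε₂ hε₂ hε₂' hrec
end

section
/- For every natural number p and every x ∈ ℝ, ξ_p(2p+1)(x) = a(x)^{p+1}. -/
/-- The coefficients `ξ_k(n)` attached to a function `a : ℝ → ℝ`:
`ξ₀(0) = 0`, `ξ₀(n) = n·a⁽ⁿ⁻¹⁾` for `n ≥ 1`, and for `k ≥ 1`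
`ξ_k(n) = ∑_{i=0}^{n−2k} ξ_{k−1}(i+2k−2)·C(n, i+2k)·a⁽ⁿ⁻²ᵏ⁻ⁱ⁾` when `n ≥ 2k`,
`ξ_k(n) = 0` when `n < 2k`. -/
noncomputable def xi (a : ℝ → ℝ) : ℕ → ℕ → ℝ → ℝ
  | 0, n => if n = 0 then 0 else fun x => (n : ℝ) * iteratedDeriv (n - 1) a x
  | k + 1, n =>
      if 2 * (k + 1) ≤ n then
        fun x => ∑ i ∈ Finset.range (n - 2 * (k + 1) + 1),
          xi a k (i + 2 * (k + 1) - 2) x * ((n.choose (i + 2 * (k + 1))) : ℝ)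
            * iteratedDeriv (n - 2 * (k + 1) - i) a x
      else 0

/-! At `n = 2k` and `n = 2k + 1` the sum defining `ξ_k(n)` has one and two terms respectively,
so `ξ_k(2k) = 0` and `ξ_{k+1}(2k+3) = ξ_k(2k+1) · a`, and the claim follows by induction on `p`. -/

theorem xi_two_mul (a : ℝ → ℝ) (k : ℕ) (x : ℝ) : xi a k (2 * k) x = 0 := by
  induction k with
  | zero => simp [xi]
  | succ k ih =>
    simp only [xi, le_refl, if_pos, Nat.sub_self, zero_add, Finset.sum_range_one]
    rw [show 2 * (k + 1) - 2 = 2 * k by omega, ih, zero_mul, zero_mul]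

theorem xi_succ_two_mul_add_three (a : ℝ → ℝ) (k : ℕ) (x : ℝ) :
    xi a (k + 1) (2 * k + 3) x = xi a k (2 * k + 1) x * a x := by
  have hle : 2 * (k + 1) ≤ 2 * k + 3 := by omega
  simp only [xi, if_pos hle, show 2 * k + 3 - 2 * (k + 1) = 1 by omega, Finset.sum_range_succ]
  rw [show 0 + 2 * (k + 1) - 2 = 2 * k by omega, show 1 + 2 * (k + 1) - 2 = 2 * k + 1 by omega,
    show 1 + 2 * (k + 1) = 2 * k + 3 by omega, xi_two_mul, Nat.choose_self, Nat.sub_self,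
    iteratedDeriv_zero]
  simp

theorem statement11_general (a : ℝ → ℝ) (p : ℕ) (x : ℝ) :
    xi a p (2 * p + 1) x = a x ^ (p + 1) := by
  induction p with
  | zero => simp [xi]
  | succ p ih => rw [show 2 * (p + 1) + 1 = 2 * p + 3 by omega, xi_succ_two_mul_add_three, ih,
      ← pow_succ]

/-- For every natural number `p` and every `x`, `ξ_p(2p+1)(x) = a(x)^{p+1}`. -/
theorem statement11 (a : ℝ → ℝ) (ha : ContDiff ℝ (⊤ : ℕ∞) a) (p : ℕ) (x : ℝ) :
    xi a p (2 * p + 1) x = a x ^ (p + 1) :=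
  statement11_general a p x
end

section
/- For every natural number p ≥ 1 and every x ∈ ℝ, ξ_{p−1}(2p)(x) = p·(p+1)·a(x)^{p−1}·a′(x). -/
/-! `ξ_{k+1}(2k+2+m)` only involves `ξ_k(2k), …, ξ_k(2k+m)`, so the first three diagonals
`n = 2k, 2k+1, 2k+2` can be computed by induction on `k` without knowing the others:
`ξ_k(2k) = 0`, `ξ_k(2k+1) = a^(k+1)`, and then `ξ_{k+1}(2k+4) = a·ξ_k(2k+2) + (2k+4)·a^(k+1)·a'`. -/

namespace xi

variable (a : ℝ → ℝ)

theorem succ_apply_two_mul_add (k m : ℕ) (x : ℝ) :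
    xi a (k + 1) (2 * k + 2 + m) x =
      ∑ i ∈ Finset.range (m + 1), xi a k (2 * k + i) x *
        ((2 * k + 2 + m).choose (2 * k + 2 + i) : ℝ) * iteratedDeriv (m - i) a x := by
  rw [xi, if_pos (by omega)]
  refine Finset.sum_congr (by congr 1; omega) fun i _ => ?_
  rw [show i + 2 * (k + 1) - 2 = 2 * k + i by omega, show i + 2 * (k + 1) = 2 * k + 2 + i by omega,
    show 2 * k + 2 + m - 2 * (k + 1) - i = m - i by omega]

theorem apply_two_mul (k : ℕ) (x : ℝ) : xi a k (2 * k) x = 0 := by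
  induction k with
  | zero => simp [xi]
  | succ k ih =>
    rw [show 2 * (k + 1) = 2 * k + 2 + 0 by ring, succ_apply_two_mul_add]
    simp [ih]

theorem apply_two_mul_add_one (k : ℕ) (x : ℝ) : xi a k (2 * k + 1) x = a x ^ (k + 1) := by
  induction k with
  | zero => simp [xi]
  | succ k ih =>
    rw [show 2 * (k + 1) + 1 = 2 * k + 2 + 1 by ring, succ_apply_two_mul_add]
    simp [Finset.sum_range_succ, apply_two_mul, ih, pow_succ]

theorem apply_two_mul_add_two (k : ℕ) (x : ℝ) :
    xi a k (2 * k + 2) x = ((k : ℝ) + 1) * ((k : ℝ) + 2) * a x ^ k * deriv a x := by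
  induction k with
  | zero => simp [xi]
  | succ k ih =>
    rw [show 2 * (k + 1) + 2 = 2 * k + 2 + 2 by ring, succ_apply_two_mul_add]
    simp [Finset.sum_range_succ, apply_two_mul, ih, apply_two_mul_add_one]
    ring

end xi

theorem statement12_general (a : ℝ → ℝ) (p : ℕ) (hp : 1 ≤ p) (x : ℝ) :
    xi a (p - 1) (2 * p) x = (p : ℝ) * ((p : ℝ) + 1) * a x ^ (p - 1) * deriv a x := by
  obtain ⟨k, rfl⟩ := Nat.exists_eq_add_of_le' hp
  rw [Nat.add_sub_cancel, show 2 * (k + 1) = 2 * k + 2 by ring, xi.apply_two_mul_add_two]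
  push_cast
  ring

/-- For every natural number `p ≥ 1` and every `x`,
`ξ_{p−1}(2p)(x) = p·(p+1)·a(x)^{p−1}·a′(x)`. -/
theorem statement12 (a : ℝ → ℝ) (ha : ContDiff ℝ (⊤ : ℕ∞) a) (p : ℕ) (hp : 1 ≤ p) (x : ℝ) :
    xi a (p - 1) (2 * p) x = (p : ℝ) * ((p : ℝ) + 1) * a x ^ (p - 1) * deriv a x :=
  statement12_general a p hp x
end

section
/- Let a : ℝ → ℝ be smooth and let F : ℝ → ℝ be three times differentiable with F‴ = a. Then for every natural number p ≥ 1 and every x ∈ ℝ, ∑_{i=1}^{2p−2} i · a^{(i−1)}(x) · C(2p, i+2) · a^{(2p−2−i)}(x) = 2p · (a·F′)^{(2p−1)}(x) − 2 · (a·F)^{(2p)}(x) + 2 · F(x) · a^{(2p)}(x) + 2p · F′(x) · a^{(2p−1)}(x). -/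
/-!
Write `n = 2p`. By Leibniz's rule and `n · C(n-1, k) = (n - k) · C(n, k)`,
`n (aF')⁽ⁿ⁻¹⁾ - 2 (aF)⁽ⁿ⁾ = ∑ₖ (n - k - 2) C(n, k) a⁽ᵏ⁾ F⁽ⁿ⁻ᵏ⁾`.
The terms `k = n` and `k = n - 1` cancel `2 F a⁽ⁿ⁾ + n F' a⁽ⁿ⁻¹⁾`, the term `k = n - 2`
vanishes, and in the remaining ones `i = n - 2 - k ≥ 1`, so `F⁽ⁿ⁻ᵏ⁾ = F⁽ⁱ⁺²⁾ = a⁽ⁱ⁻¹⁾`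
because `F''' = a`.
-/

open Finset
open scoped ContDiff

theorem sum_choose_mul_eq_sum_sub_two_mul_choose {R : Type*} [CommRing R] (n : ℕ)
    (u v : ℕ → R) (huv : ∀ j, v (j + 3) = u j) :
    ∑ i ∈ Icc 1 (n - 2), (i : R) * u (i - 1) * n.choose (i + 2) * u (n - 2 - i)
      = ∑ k ∈ range (n + 1), (((n - k : ℕ) : R) - 2) * n.choose k * u k * v (n - k)
        + 2 * v 0 * u n + n * v 1 * u (n - 1) := by
  obtain _ | _ | m := n
  · simp; ring
  · simp [sum_range_succ]; ring
  have hreflect : ∑ k ∈ range (m + 3),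
        (((m + 2 - k : ℕ) : R) - 2) * (m + 2).choose k * u k * v (m + 2 - k)
      = ∑ j ∈ range (m + 3), ((j : R) - 2) * (m + 2).choose j * u (m + 2 - j) * v j := by
    rw [← sum_range_reflect]
    refine sum_congr rfl fun j hj => ?_
    have hj : j ≤ m + 2 := by simp at hj; omega
    rw [show m + 3 - 1 - j = m + 2 - j by omega, show m + 2 - (m + 2 - j) = j by omega,
      Nat.choose_symm hj]
  have hshift : ∑ i ∈ Icc 1 m, (i : R) * u (i - 1) * (m + 2).choose (i + 2) * u (m - i)
      = ∑ j ∈ range m,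
          ((j + 3 : ℕ) - 2 : R) * (m + 2).choose (j + 3) * u (m + 2 - (j + 3)) * v (j + 3) := by
    rw [← Ico_add_one_right_eq_Icc, sum_Ico_eq_sum_range]
    refine sum_congr (by simp) fun j hj => ?_
    rw [huv, show m + 2 - (j + 3) = m - (1 + j) by omega, show 1 + j - 1 = j by omega,
      show 1 + j + 2 = j + 3 by omega]
    push_cast
    ring
  rw [show m + 2 + 1 = m + 3 by rfl, show m + 2 - 2 = m by omega, hreflect, hshift,
    sum_range_succ', sum_range_succ', sum_range_succ']
  simp
  ring_nf

variable {𝕜 : Type*} [NontriviallyNormedField 𝕜] {E : Type*} [NormedAddCommGroup E]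
  [NormedSpace 𝕜 E]

theorem contDiff_infty_of_differentiable_of_iteratedDeriv_three {F : 𝕜 → E}
    (hF : Differentiable 𝕜 F) (hF' : Differentiable 𝕜 (deriv F))
    (hF'' : Differentiable 𝕜 (deriv (deriv F))) (h3 : ContDiff 𝕜 ∞ (iteratedDeriv 3 F)) :
    ContDiff 𝕜 ∞ F := by
  rw [iteratedDeriv_eq_iterate] at h3
  exact contDiff_infty_iff_deriv.2 ⟨hF, contDiff_infty_iff_deriv.2 ⟨hF',
    contDiff_infty_iff_deriv.2 ⟨hF'', h3⟩⟩⟩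

theorem iteratedDeriv_add_eq_iteratedDeriv_iteratedDeriv (F : 𝕜 → E) (j k : ℕ) :
    iteratedDeriv (j + k) F = iteratedDeriv j (iteratedDeriv k F) := by
  simp only [iteratedDeriv_eq_iterate, Function.iterate_add_apply]

theorem natCast_mul_iteratedDeriv_pred_mul_deriv {a G : 𝕜 → 𝕜} (ha : ContDiff 𝕜 ∞ a)
    (hG : ContDiff 𝕜 ∞ G) (n : ℕ) (x : 𝕜) :
    n * iteratedDeriv (n - 1) (fun t => a t * deriv G t) x
      = ∑ k ∈ range (n + 1), ((n - k : ℕ) : 𝕜) * n.choose k * iteratedDeriv k a x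
          * iteratedDeriv (n - k) G x := by
  obtain _ | m := n
  · simp
  have hG' : ContDiff 𝕜 ∞ (deriv G) := (contDiff_infty_iff_deriv.1 hG).2
  rw [add_tsub_cancel_right, iteratedDeriv_fun_mul (ha.contDiffAt.of_le (mod_cast le_top))
    (hG'.contDiffAt.of_le (mod_cast le_top)), mul_sum, sum_range_succ _ (m + 1)]
  simp only [Nat.sub_self, Nat.cast_zero, zero_mul, add_zero]
  refine sum_congr rfl fun k hk => ?_
  have hk : k ≤ m := Nat.lt_succ_iff.1 (mem_range.1 hk)
  have hchoose : ((m + 1 : ℕ) : 𝕜) * m.choose k = (m + 1 - k : ℕ) * (m + 1).choose k := by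
    exact_mod_cast congrArg (Nat.cast : ℕ → 𝕜)
      ((mul_comm _ _).trans ((Nat.choose_mul_succ_eq m k).trans (mul_comm _ _)))
  rw [← iteratedDeriv_succ', show m - k + 1 = m + 1 - k by omega, ← hchoose]
  ring

theorem natCast_mul_iteratedDeriv_pred_mul_deriv_sub_two_mul {a G : 𝕜 → 𝕜}
    (ha : ContDiff 𝕜 ∞ a) (hG : ContDiff 𝕜 ∞ G) (n : ℕ) (x : 𝕜) :
    n * iteratedDeriv (n - 1) (fun t => a t * deriv G t) x
        - 2 * iteratedDeriv n (fun t => a t * G t) x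
      = ∑ k ∈ range (n + 1), (((n - k : ℕ) : 𝕜) - 2) * n.choose k * iteratedDeriv k a x
          * iteratedDeriv (n - k) G x := by
  rw [natCast_mul_iteratedDeriv_pred_mul_deriv ha hG, iteratedDeriv_fun_mul
    (ha.contDiffAt.of_le (mod_cast le_top)) (hG.contDiffAt.of_le (mod_cast le_top)), mul_sum,
    ← sum_sub_distrib]
  refine sum_congr rfl fun k _ => ?_
  ring

theorem statement14_general (a : ℝ → ℝ) (ha : ContDiff ℝ (⊤ : ℕ∞) a)
    (F : ℝ → ℝ) (hF : Differentiable ℝ F) (hF' : Differentiable ℝ (deriv F))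
    (hF'' : Differentiable ℝ (deriv (deriv F)))
    (hF3 : ∀ x : ℝ, iteratedDeriv 3 F x = a x)
    (p : ℕ) (x : ℝ) :
    ∑ i ∈ Finset.Icc 1 (2 * p - 2),
        (i : ℝ) * iteratedDeriv (i - 1) a x * (((2 * p).choose (i + 2)) : ℝ)
          * iteratedDeriv (2 * p - 2 - i) a x
      = 2 * (p : ℝ) * iteratedDeriv (2 * p - 1) (fun t => a t * deriv F t) x
        - 2 * iteratedDeriv (2 * p) (fun t => a t * F t) x
        + 2 * F x * iteratedDeriv (2 * p) a x
        + 2 * (p : ℝ) * deriv F x * iteratedDeriv (2 * p - 1) a x := by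
  have h3 : iteratedDeriv 3 F = a := funext hF3
  have hFsmooth : ContDiff ℝ ∞ F :=
    contDiff_infty_of_differentiable_of_iteratedDeriv_three hF hF' hF'' (h3 ▸ ha)
  have hsum := sum_choose_mul_eq_sum_sub_two_mul_choose (2 * p) (iteratedDeriv · a x)
    (iteratedDeriv · F x) fun j => by rw [iteratedDeriv_add_eq_iteratedDeriv_iteratedDeriv, h3]
  rw [← natCast_mul_iteratedDeriv_pred_mul_deriv_sub_two_mul ha hFsmooth] at hsum
  simp only [iteratedDeriv_zero, iteratedDeriv_one, Nat.cast_mul, Nat.cast_ofNat] at hsum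
  exact hsum

/-- Let `a : ℝ → ℝ` be smooth and `F` three times differentiable with `F‴ = a`.  Then for
`p ≥ 1`,
`∑_{i=1}^{2p−2} i·a⁽ⁱ⁻¹⁾(x)·C(2p, i+2)·a⁽²ᵖ⁻²⁻ⁱ⁾(x)
  = 2p·(a·F′)⁽²ᵖ⁻¹⁾(x) − 2·(a·F)⁽²ᵖ⁾(x) + 2·F(x)·a⁽²ᵖ⁾(x) + 2p·F′(x)·a⁽²ᵖ⁻¹⁾(x)`. -/
theorem statement14 (a : ℝ → ℝ) (ha : ContDiff ℝ (⊤ : ℕ∞) a)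
    (F : ℝ → ℝ) (hF : Differentiable ℝ F) (hF' : Differentiable ℝ (deriv F))
    (hF'' : Differentiable ℝ (deriv (deriv F)))
    (hF3 : ∀ x : ℝ, iteratedDeriv 3 F x = a x)
    (p : ℕ) (hp : 1 ≤ p) (x : ℝ) :
    ∑ i ∈ Finset.Icc 1 (2 * p - 2),
        (i : ℝ) * iteratedDeriv (i - 1) a x * (((2 * p).choose (i + 2)) : ℝ)
          * iteratedDeriv (2 * p - 2 - i) a x
      = 2 * (p : ℝ) * iteratedDeriv (2 * p - 1) (fun t => a t * deriv F t) x
        - 2 * iteratedDeriv (2 * p) (fun t => a t * F t) x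
        + 2 * F x * iteratedDeriv (2 * p) a x
        + 2 * (p : ℝ) * deriv F x * iteratedDeriv (2 * p - 1) a x :=
  statement14_general a ha F hF hF' hF'' hF3 p x
end

section
/- Let m ≥ 1 and let b₁, …, b_m : ℝ → ℝ be smooth. Suppose c₁, …, c_m : ℝ → ℝ are smooth and satisfy c_p′ + c_{p+1} + c₁·b_p = b_p for every 1 ≤ p ≤ m−1, together with c_m′ + c₁·b_m = b_m. Then the function Y := c₁ − 1 satisfies the adjoint equation: for all x ∈ ℝ, (−1)^m · Y^{(m)}(x) = ∑_{k=1}^{m} (−1)^{m−k} · (Y·b_k)^{(m−k)}(x). -/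
/-!
Write `D_j = (-1)^j Y⁽ʲ⁾ - ∑_{k ≤ j} (-1)^(j-k) (Y b_k)⁽ʲ⁻ᵏ⁾`, so that the adjoint equation says
`D_m = 0`. Differentiating gives `D_{j+1} = -D_j' - Y b_{j+1}`, while the hypotheses on `c`
read `c_{p+1} = -c_p' - Y b_p` and `0 = -c_m' - Y b_m`. Since `D_0 = Y = c₁ - 1` has the same
derivative as `c₁`, induction gives `D_j = c_{j+1}` for `1 ≤ j < m`, and finally `D_m = 0`.
-/

open Finset

section

variable {𝕜 : Type*} [NontriviallyNormedField 𝕜]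

noncomputable def adjointDefect (b : ℕ → 𝕜 → 𝕜) (Y : 𝕜 → 𝕜) (j : ℕ) (x : 𝕜) : 𝕜 :=
  (-1) ^ j * iteratedDeriv j Y x
    - ∑ k ∈ Icc 1 j, (-1) ^ (j - k) * iteratedDeriv (j - k) (fun t => Y t * b k t) x

variable {b : ℕ → 𝕜 → 𝕜} {Y : 𝕜 → 𝕜}

@[simp]
lemma adjointDefect_zero : adjointDefect b Y 0 = Y := by
  ext x
  simp [adjointDefect]

lemma adjointDefect_succ {j : ℕ} (hY : ContDiff 𝕜 (j + 1) Y)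
    (hYb : ∀ k ∈ Icc 1 j, ContDiff 𝕜 j (fun t => Y t * b k t)) (x : 𝕜) :
    adjointDefect b Y (j + 1) x = -deriv (adjointDefect b Y j) x - Y x * b (j + 1) x := by
  have hsum : HasDerivAt
      (fun x => ∑ k ∈ Icc 1 j, (-1) ^ (j - k) * iteratedDeriv (j - k) (fun t => Y t * b k t) x)
      (∑ k ∈ Icc 1 j, (-1) ^ (j - k) * iteratedDeriv (j + 1 - k) (fun t => Y t * b k t) x) x := by
    refine HasDerivAt.fun_sum fun k hk => ?_
    have hkj : j + 1 - k = j - k + 1 := by grind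
    rw [hkj, iteratedDeriv_succ]
    refine (((hYb k hk).of_le ?_).differentiable_iteratedDeriv' _ x).hasDerivAt.const_mul _
    exact_mod_cast (by grind : j - k + 1 ≤ j)
  have hdefect : HasDerivAt (adjointDefect b Y j)
      ((-1) ^ j * iteratedDeriv (j + 1) Y x
        - ∑ k ∈ Icc 1 j, (-1) ^ (j - k) * iteratedDeriv (j + 1 - k) (fun t => Y t * b k t) x) x := by
    rw [iteratedDeriv_succ]
    exact ((hY.differentiable_iteratedDeriv' j x).hasDerivAt.const_mul _).sub hsum
  have hsign :
      ∑ k ∈ Icc 1 j, (-1) ^ (j + 1 - k) * iteratedDeriv (j + 1 - k) (fun t => Y t * b k t) x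
        = -∑ k ∈ Icc 1 j, (-1) ^ (j - k) * iteratedDeriv (j + 1 - k) (fun t => Y t * b k t) x := by
    rw [← sum_neg_distrib]
    refine sum_congr rfl fun k hk => ?_
    rw [show j + 1 - k = j - k + 1 by grind, pow_succ]
    ring
  rw [hdefect.deriv, adjointDefect, sum_Icc_succ_top (by omega), Nat.sub_self, pow_zero,
    iteratedDeriv_zero, hsign]
  ring

end

/-- Let `m ≥ 1` and `b₁, …, b_m` be smooth.  If smooth `c₁, …, c_m` satisfy
`c_p′ + c_{p+1} + c₁·b_p = b_p` for `1 ≤ p ≤ m−1` and `c_m′ + c₁·b_m = b_m`, then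
`Y := c₁ − 1` satisfies the adjoint equation
`(−1)^m·Y⁽ᵐ⁾ = ∑_{k=1}^m (−1)^{m−k}·(Y·b_k)⁽ᵐ⁻ᵏ⁾`. -/
theorem statement16 (m : ℕ) (hm : 1 ≤ m) (b c : ℕ → ℝ → ℝ)
    (hb : ∀ p ∈ Finset.Icc 1 m, ContDiff ℝ (⊤ : ℕ∞) (b p))
    (hc : ∀ p ∈ Finset.Icc 1 m, ContDiff ℝ (⊤ : ℕ∞) (c p))
    (hrec : ∀ p, 1 ≤ p → p ≤ m - 1 →
      ∀ x : ℝ, deriv (c p) x + c (p + 1) x + c 1 x * b p x = b p x)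
    (hlast : ∀ x : ℝ, deriv (c m) x + c 1 x * b m x = b m x) :
    ∀ x : ℝ, (-1 : ℝ) ^ m * iteratedDeriv m (fun t => c 1 t - 1) x
      = ∑ k ∈ Finset.Icc 1 m,
          (-1 : ℝ) ^ (m - k) * iteratedDeriv (m - k) (fun t => (c 1 t - 1) * b k t) x := by
  set Y : ℝ → ℝ := fun t => c 1 t - 1
  have hY : ContDiff ℝ (⊤ : ℕ∞) Y := (hc 1 (by simp [hm])).sub contDiff_const
  have hstep : ∀ j < m, ∀ x,
      adjointDefect b Y (j + 1) x = -deriv (adjointDefect b Y j) x - Y x * b (j + 1) x :=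
    fun j hj => adjointDefect_succ (hY.of_le (by exact_mod_cast le_top))
      fun k hk => (hY.mul (hb k (by grind))).of_le (by exact_mod_cast le_top)
  have hderiv : ∀ j < m, deriv (adjointDefect b Y j) = deriv (c (j + 1)) := by
    intro j
    induction j with
    | zero => exact fun _ => by simp [Y]
    | succ j ih =>
      intro hj
      suffices adjointDefect b Y (j + 1) = c (j + 2) by rw [this]
      funext x
      rw [hstep j (by omega), ih (by omega)]
      linarith [hrec (j + 1) (by omega) (by omega) x]
  intro x
  have hfinal := hstep (m - 1) (by omega) x
  rw [Nat.sub_add_cancel hm, hderiv (m - 1) (by omega), Nat.sub_add_cancel hm] at hfinal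
  rw [← sub_eq_zero]
  change adjointDefect b Y m x = 0
  linarith [hlast x]
end

section
/- Let b₁, b₂, b₃, F : ℝ → ℝ, and let y₁, y₂ : ℝ → ℝ be three times differentiable solutions of y‴ + b₁·y″ + b₂·y′ + b₃·y = 0 such that y₂ is nowhere vanishing and the function w := (y₁/y₂)′ is nowhere vanishing. Let A, G, H, K : ℝ → ℝ be differentiable functions with A′ = b₁, G′(x) = e^{A(x)}·y₂(x)²·w(x)·F(x), H′(x) = e^{−A(x)}·G(x)/(y₂(x)³·w(x)²), and K′(x) = w(x)·H(x) for all x ∈ ℝ. Then Y := y₂·K is three times differentiable and satisfies Y‴(x) + b₁(x)·Y″(x) + b₂(x)·Y′(x) + b₃(x)·Y(x) = F(x) for all x ∈ ℝ. -/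
/-!
Let `L y = y‴ + b₁ y″ + b₂ y′ + b₃ y` and write `y₁ = y₂ u` with `u′ = w`. Since `L y₂ = 0`,
the product rule gives `L (y₂ K) = p K′ + q K″ + y₂ K‴` with `p = 3 y₂″ + 2 b₁ y₂′ + b₂ y₂` and
`q = 3 y₂′ + b₁ y₂`; for `K = u`, `L y₁ = 0` then says `p w + q w′ + y₂ w″ = 0`. So for `K′ = w H`
the terms in `H` cancel and `L (y₂ K) = (q w + 2 y₂ w′) H′ + y₂ w H″`, which is
`(e^A y₂³ w² H′)′ / (e^A y₂² w)`. But `e^A y₂³ w² H′ = G`, whose derivative is `e^A y₂² w F`.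
-/

open Real

variable {𝕜 : Type*} [NontriviallyNormedField 𝕜]

variable (𝕜) in
/-- `f, f′, …, f⁽ⁿ⁻¹⁾` are differentiable; unlike `ContDiff 𝕜 n f`, no continuity of `f⁽ⁿ⁾`. -/
def IterDifferentiable : ℕ → (𝕜 → 𝕜) → Prop
  | 0, _ => True
  | n + 1, f => Differentiable 𝕜 f ∧ IterDifferentiable n (deriv f)

namespace IterDifferentiable

theorem of_succ : ∀ {n : ℕ} {f : 𝕜 → 𝕜}, IterDifferentiable 𝕜 (n + 1) f → IterDifferentiable 𝕜 n f
  | 0, _, _ => trivial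
  | _ + 1, _, ⟨hf, hf'⟩ => ⟨hf, hf'.of_succ⟩

theorem neg : ∀ {n : ℕ} {f : 𝕜 → 𝕜}, IterDifferentiable 𝕜 n f → IterDifferentiable 𝕜 n (-f)
  | 0, _, _ => trivial
  | _ + 1, _, ⟨hf, hf'⟩ => ⟨hf.neg, by rw [deriv.neg']; exact hf'.neg⟩

theorem add : ∀ {n : ℕ} {f g : 𝕜 → 𝕜},
    IterDifferentiable 𝕜 n f → IterDifferentiable 𝕜 n g → IterDifferentiable 𝕜 n (f + g)
  | 0, _, _, _, _ => trivial
  | _ + 1, _, _, ⟨hf, hf'⟩, ⟨hg, hg'⟩ =>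
    ⟨hf.add hg, by rw [show deriv (_ + _) = _ from funext fun x => deriv_add (hf x) (hg x)]
                   exact hf'.add hg'⟩

theorem mul : ∀ {n : ℕ} {f g : 𝕜 → 𝕜},
    IterDifferentiable 𝕜 n f → IterDifferentiable 𝕜 n g → IterDifferentiable 𝕜 n (f * g)
  | 0, _, _, _, _ => trivial
  | _ + 1, _, _, hf, hg =>
    ⟨hf.1.mul hg.1, by
      rw [show deriv (_ * _) = _ from funext fun x => deriv_mul (hf.1 x) (hg.1 x)]
      exact (hf.2.mul hg.of_succ).add (hf.of_succ.mul hg.2)⟩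

theorem inv : ∀ {n : ℕ} {f : 𝕜 → 𝕜}, IterDifferentiable 𝕜 n f → (∀ x, f x ≠ 0) →
    IterDifferentiable 𝕜 n f⁻¹
  | 0, _, _, _ => trivial
  | _ + 1, f, hf, hf0 =>
    have hinv := hf.of_succ.inv hf0
    ⟨hf.1.inv hf0, by
      rw [show deriv f⁻¹ = -deriv f * (f⁻¹ * f⁻¹) from funext fun x => by
        simp only [deriv_inv'' (hf.1 x) (hf0 x), Pi.mul_apply, Pi.neg_apply, Pi.inv_apply]
        ring]
      exact hf.2.neg.mul (hinv.mul hinv)⟩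

theorem div {n : ℕ} {f g : 𝕜 → 𝕜} (hf : IterDifferentiable 𝕜 n f) (hg : IterDifferentiable 𝕜 n g)
    (hg0 : ∀ x, g x ≠ 0) : IterDifferentiable 𝕜 n (f / g) := by
  rw [div_eq_mul_inv]
  exact hf.mul (hg.inv hg0)

end IterDifferentiable

section Leibniz

variable {f g : 𝕜 → 𝕜}

theorem deriv_mul_eq (hf : Differentiable 𝕜 f) (hg : Differentiable 𝕜 g) :
    deriv (f * g) = deriv f * g + f * deriv g :=
  funext fun x => deriv_mul (hf x) (hg x)

theorem deriv_deriv_mul (hf : IterDifferentiable 𝕜 2 f) (hg : IterDifferentiable 𝕜 2 g) :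
    deriv (deriv (f * g)) = fun x =>
      deriv (deriv f) x * g x + 2 * (deriv f x * deriv g x) + f x * deriv (deriv g) x := by
  obtain ⟨hf₀, hf₁, -⟩ := hf
  obtain ⟨hg₀, hg₁, -⟩ := hg
  rw [deriv_mul_eq hf₀ hg₀]
  funext x
  exact (((hf₁ x).hasDerivAt.mul (hg₀ x).hasDerivAt).add
    ((hf₀ x).hasDerivAt.mul (hg₁ x).hasDerivAt)).deriv.trans (by ring)

theorem deriv_deriv_deriv_mul (hf : IterDifferentiable 𝕜 3 f) (hg : IterDifferentiable 𝕜 3 g)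
    (x : 𝕜) :
    deriv (deriv (deriv (f * g))) x = deriv (deriv (deriv f)) x * g x
      + 3 * (deriv (deriv f) x * deriv g x) + 3 * (deriv f x * deriv (deriv g) x)
      + f x * deriv (deriv (deriv g)) x := by
  rw [deriv_deriv_mul hf.of_succ hg.of_succ]
  obtain ⟨hf₀, hf₁, hf₂, -⟩ := hf
  obtain ⟨hg₀, hg₁, hg₂, -⟩ := hg
  exact ((((hf₂ x).hasDerivAt.mul (hg₀ x).hasDerivAt).add
    (((hf₁ x).hasDerivAt.mul (hg₁ x).hasDerivAt).const_mul 2)).add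
    ((hf₀ x).hasDerivAt.mul (hg₂ x).hasDerivAt)).deriv.trans (by ring)

end Leibniz

noncomputable def linearDiffOp3 (b₁ b₂ b₃ y : 𝕜 → 𝕜) (x : 𝕜) : 𝕜 :=
  deriv (deriv (deriv y)) x + b₁ x * deriv (deriv y) x + b₂ x * deriv y x + b₃ x * y x

theorem linearDiffOp3_mul (b₁ b₂ b₃ : 𝕜 → 𝕜) {y K : 𝕜 → 𝕜} (hy : IterDifferentiable 𝕜 3 y)
    (hK : IterDifferentiable 𝕜 3 K) (x : 𝕜) :
    linearDiffOp3 b₁ b₂ b₃ (y * K) x = K x * linearDiffOp3 b₁ b₂ b₃ y x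
      + (3 * deriv (deriv y) x + 2 * b₁ x * deriv y x + b₂ x * y x) * deriv K x
      + (3 * deriv y x + b₁ x * y x) * deriv (deriv K) x + y x * deriv (deriv (deriv K)) x := by
  rw [linearDiffOp3, linearDiffOp3, deriv_deriv_deriv_mul hy hK,
    deriv_deriv_mul hy.of_succ hK.of_succ, deriv_mul_eq hy.1 hK.1]
  simp only [Pi.add_apply, Pi.mul_apply]
  ring

theorem linearDiffOp3_mul_of_deriv_eq_mul (b₁ b₂ b₃ : 𝕜 → 𝕜) {y u H K : 𝕜 → 𝕜}
    (hy : IterDifferentiable 𝕜 3 y) (hu : IterDifferentiable 𝕜 3 u) (hH : IterDifferentiable 𝕜 2 H)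
    (hK : IterDifferentiable 𝕜 3 K) (hK' : deriv K = deriv u * H) {x : 𝕜}
    (hLy : linearDiffOp3 b₁ b₂ b₃ y x = 0) (hLyu : linearDiffOp3 b₁ b₂ b₃ (y * u) x = 0) :
    linearDiffOp3 b₁ b₂ b₃ (y * K) x =
      ((3 * deriv y x + b₁ x * y x) * deriv u x + 2 * y x * deriv (deriv u) x) * deriv H x
        + y x * deriv u x * deriv (deriv H) x := by
  have hw := hu.2
  rw [linearDiffOp3_mul b₁ b₂ b₃ hy hu, hLy] at hLyu
  rw [linearDiffOp3_mul b₁ b₂ b₃ hy hK, hLy, hK', deriv_deriv_mul hw hH, deriv_mul_eq hw.1 hH.1]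
  simp only [Pi.add_apply, Pi.mul_apply]
  linear_combination H x * hLyu

theorem deriv_exp_mul_pow_three_mul_sq_mul {A y w P : ℝ → ℝ} {x : ℝ} (hA : DifferentiableAt ℝ A x)
    (hy : DifferentiableAt ℝ y x) (hw : DifferentiableAt ℝ w x) (hP : DifferentiableAt ℝ P x) :
    deriv (fun t => exp (A t) * y t ^ 3 * w t ^ 2 * P t) x = exp (A x) * y x ^ 2 * w x *
      (((3 * deriv y x + deriv A x * y x) * w x + 2 * y x * deriv w x) * P x
        + y x * w x * deriv P x) :=
  ((((hA.hasDerivAt.exp).fun_mul (hy.hasDerivAt.fun_pow 3)).fun_mul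
    (hw.hasDerivAt.fun_pow 2)).fun_mul hP.hasDerivAt).deriv.trans (by ring)

/-- Let `y₁, y₂` be three times differentiable solutions of
`y‴ + b₁·y″ + b₂·y′ + b₃·y = 0` with `y₂` nowhere vanishing and `w := (y₁/y₂)′` nowhere
vanishing.  If `A, G, H, K` are differentiable with `A′ = b₁`, `G′ = e^A·y₂²·w·F`,
`H′ = e^{−A}·G/(y₂³·w²)` and `K′ = w·H`, then `Y := y₂·K` is three times differentiable and
satisfies `Y‴ + b₁·Y″ + b₂·Y′ + b₃·Y = F`. -/
theorem statement18 (b₁ b₂ b₃ F : ℝ → ℝ)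
    (y₁ y₂ : ℝ → ℝ)
    (hy₁ : Differentiable ℝ y₁) (hy₁' : Differentiable ℝ (deriv y₁))
    (hy₁'' : Differentiable ℝ (deriv (deriv y₁)))
    (hy₂ : Differentiable ℝ y₂) (hy₂' : Differentiable ℝ (deriv y₂))
    (hy₂'' : Differentiable ℝ (deriv (deriv y₂)))
    (hode₁ : ∀ x : ℝ, deriv (deriv (deriv y₁)) x + b₁ x * deriv (deriv y₁) x
        + b₂ x * deriv y₁ x + b₃ x * y₁ x = 0)
    (hode₂ : ∀ x : ℝ, deriv (deriv (deriv y₂)) x + b₁ x * deriv (deriv y₂) x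
        + b₂ x * deriv y₂ x + b₃ x * y₂ x = 0)
    (hy₂0 : ∀ x : ℝ, y₂ x ≠ 0)
    (w : ℝ → ℝ) (hw : w = deriv (fun x => y₁ x / y₂ x)) (hw0 : ∀ x : ℝ, w x ≠ 0)
    (A G H K : ℝ → ℝ)
    (hA : Differentiable ℝ A) (hG : Differentiable ℝ G)
    (hH : Differentiable ℝ H) (hK : Differentiable ℝ K)
    (hA' : ∀ x : ℝ, deriv A x = b₁ x)
    (hG' : ∀ x : ℝ, deriv G x = Real.exp (A x) * (y₂ x) ^ 2 * w x * F x)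
    (hH' : ∀ x : ℝ, deriv H x = Real.exp (-A x) * G x / ((y₂ x) ^ 3 * (w x) ^ 2))
    (hK' : ∀ x : ℝ, deriv K x = w x * H x) :
    (Differentiable ℝ (fun t => y₂ t * K t)
        ∧ Differentiable ℝ (deriv (fun t => y₂ t * K t))
        ∧ Differentiable ℝ (deriv (deriv (fun t => y₂ t * K t))))
      ∧ ∀ x : ℝ, deriv (deriv (deriv (fun t => y₂ t * K t))) x
          + b₁ x * deriv (deriv (fun t => y₂ t * K t)) x
          + b₂ x * deriv (fun t => y₂ t * K t) x + b₃ x * (y₂ x * K x) = F x := by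
  have hy₂₃ : IterDifferentiable ℝ 3 y₂ := ⟨hy₂, hy₂', hy₂'', trivial⟩
  have hy₁₃ : IterDifferentiable ℝ 3 y₁ := ⟨hy₁, hy₁', hy₁'', trivial⟩
  have hu₃ : IterDifferentiable ℝ 3 (y₁ / y₂) := hy₁₃.div hy₂₃ hy₂0
  have hu' : deriv (y₁ / y₂) = w := hw.symm
  have hy₁_eq : y₁ = y₂ * (y₁ / y₂) := funext fun x => (mul_div_cancel₀ _ (hy₂0 x)).symm
  have hw₁ : Differentiable ℝ w := hu' ▸ hu₃.2.1
  have hH₂ : IterDifferentiable ℝ 2 H :=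
    ⟨hH, by
      rw [show deriv H = _ from funext hH']
      exact ((hA.neg.exp).mul hG).div ((hy₂.pow 3).mul (hw₁.pow 2))
        fun x => mul_ne_zero (pow_ne_zero 3 (hy₂0 x)) (pow_ne_zero 2 (hw0 x)), trivial⟩
  have hK_deriv : deriv K = deriv (y₁ / y₂) * H := hu'.symm ▸ funext hK'
  have hK₃ : IterDifferentiable ℝ 3 K := ⟨hK, hK_deriv ▸ hu₃.2.mul hH₂⟩
  obtain ⟨hY₀, hY₁, hY₂, -⟩ := hy₂₃.mul hK₃
  refine ⟨⟨hY₀, hY₁, hY₂⟩, fun x => ?_⟩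
  have hG_eq : G = fun t => exp (A t) * y₂ t ^ 3 * w t ^ 2 * deriv H t := funext fun t => by
    rw [hH' t, exp_neg]
    field_simp [hy₂0 t, hw0 t]
  have hGx := hG' x
  rw [hG_eq, deriv_exp_mul_pow_three_mul_sq_mul (hA x) (hy₂ x) (hw₁ x) (hH₂.2.1 x),
    hA' x] at hGx
  change linearDiffOp3 b₁ b₂ b₃ (y₂ * K) x = F x
  rw [linearDiffOp3_mul_of_deriv_eq_mul b₁ b₂ b₃ hy₂₃ hu₃ hH₂ hK₃ hK_deriv (hode₂ x)
    (hy₁_eq ▸ hode₁ x), hu']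
  apply mul_left_cancel₀ (mul_ne_zero (mul_ne_zero (exp_ne_zero (A x)) (pow_ne_zero 2 (hy₂0 x)))
    (hw0 x))
  linear_combination hGx
end

section
/- Suppose α_p(n) : ℝ → ℝ (1 ≤ p ≤ m, n ∈ ℕ) is any family of smooth functions satisfying the recurrences α_p(n+1) = (α_p(n))′ + α_{p+1}(n) + α₁(n)·b_p for 1 ≤ p ≤ m−1 and α_m(n+1) = (α_m(n))′ + α₁(n)·b_m, for all n ∈ ℕ. Then the first coefficient α₁ satisfies the single higher-order recurrence: for every natural number n and every x ∈ ℝ, ∑_{i=0}^{m} (−1)^{i+m} · C(m,i) · (α₁(n+i))^{(m−i)}(x) + ∑_{j=0}^{m} ∑_{i=0}^{m−1−j} (−1)^{j+i+m} · C(m−1−i, j) · (α₁(n+j)·b_{1+i})^{(m−1−i−j)}(x) = 0. -/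
/-!
Let `S` be the shift `n ↦ n + 1` and `D` the derivative, acting on families `ℕ → ℝ → ℝ` of smooth
functions; they commute. The recurrences say `(S - D) α_p = α_{p+1} + α₁ b_p` for `p < m` and
`(S - D) α_m = α₁ b_m`. Eliminating `α₂, …, α_m` gives
`(S - D)^m α₁ = ∑_{i<m} (S - D)^(m-1-i) (α₁ b_{1+i})`,
and expanding both sides by the binomial theorem yields the identity.
-/

open Finset
open scoped ContDiff

noncomputable def shiftSubDeriv (f : ℕ → ℝ → ℝ) : ℕ → ℝ → ℝ :=
  fun n => f (n + 1) - deriv (f n)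

section shiftSubDeriv

variable {f g : ℕ → ℝ → ℝ}

theorem contDiff_shiftSubDeriv (hf : ∀ n, ContDiff ℝ ∞ (f n)) (n : ℕ) :
    ContDiff ℝ ∞ (shiftSubDeriv f n) :=
  (hf (n + 1)).sub (contDiff_infty_iff_deriv.1 (hf n)).2

theorem contDiff_iterate_shiftSubDeriv (hf : ∀ n, ContDiff ℝ ∞ (f n)) (k n : ℕ) :
    ContDiff ℝ ∞ (shiftSubDeriv^[k] f n) := by
  induction k generalizing f with
  | zero => exact hf n
  | succ k ih => exact ih (contDiff_shiftSubDeriv hf)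

theorem shiftSubDeriv_add (hf : ∀ n, Differentiable ℝ (f n)) (hg : ∀ n, Differentiable ℝ (g n)) :
    shiftSubDeriv (f + g) = shiftSubDeriv f + shiftSubDeriv g := by
  funext n x
  simp only [shiftSubDeriv, Pi.add_apply, Pi.sub_apply, deriv_add (hf n x) (hg n x)]
  ring

theorem shiftSubDeriv_sum {ι : Type*} (s : Finset ι) (f : ι → ℕ → ℝ → ℝ)
    (hf : ∀ i ∈ s, ∀ n, Differentiable ℝ (f i n)) :
    shiftSubDeriv (∑ i ∈ s, f i) = ∑ i ∈ s, shiftSubDeriv (f i) := by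
  funext n x
  simp only [shiftSubDeriv, Finset.sum_apply, Pi.sub_apply, sum_sub_distrib]
  rw [deriv_sum fun i hi => hf i hi n x]

theorem iterate_shiftSubDeriv_apply (hf : ∀ n, ContDiff ℝ ∞ (f n)) (k n : ℕ) (x : ℝ) :
    shiftSubDeriv^[k] f n x = ∑ j ∈ range (k + 1),
      (k.choose j : ℝ) * ((-1) ^ (k - j) * iteratedDeriv (k - j) (f (n + j)) x) := by
  induction k generalizing f n with
  | zero => simp
  | succ k ih =>
    have pascal := sum_choose_succ_mul (fun j r => (-1 : ℝ) ^ r * iteratedDeriv r (f (n + j)) x) k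
    rw [Function.iterate_succ_apply, ih (contDiff_shiftSubDeriv hf), pascal, ← sum_add_distrib]
    refine sum_congr rfl fun j hj => ?_
    have hjk : k + 1 - j = k - j + 1 := by have := mem_range.1 hj; omega
    have hsub : iteratedDeriv (k - j) (shiftSubDeriv f (n + j)) x
        = iteratedDeriv (k - j) (f (n + j + 1)) x - iteratedDeriv (k - j + 1) (f (n + j)) x := by
      rw [shiftSubDeriv, iteratedDeriv_sub, iteratedDeriv_succ']
      · exact (hf _).contDiffAt.of_le ENat.LEInfty.out
      · exact (contDiff_infty_iff_deriv.1 (hf _)).2.contDiffAt.of_le ENat.LEInfty.out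
    rw [hsub, hjk, pow_succ, ← add_assoc]
    ring

theorem shiftSubDeriv_add_sum_iterate {ι : Type*} {s : Finset ι} {G : ι → ℕ → ℝ → ℝ} (e : ι → ℕ)
    (hf : ∀ n, Differentiable ℝ (f n)) (hG : ∀ i ∈ s, ∀ n, ContDiff ℝ ∞ (G i n)) :
    shiftSubDeriv (f + ∑ i ∈ s, shiftSubDeriv^[e i] (G i))
      = shiftSubDeriv f + ∑ i ∈ s, shiftSubDeriv^[e i + 1] (G i) := by
  have hGe : ∀ i ∈ s, ∀ n, Differentiable ℝ (shiftSubDeriv^[e i] (G i) n) := fun i hi n =>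
    (contDiff_iterate_shiftSubDeriv (hG i hi) _ n).differentiable (by simp)
  have hsum : ∀ n, Differentiable ℝ ((∑ i ∈ s, shiftSubDeriv^[e i] (G i)) n) := fun n => by
    simpa only [Finset.sum_apply] using Differentiable.sum fun i hi => hGe i hi n
  rw [shiftSubDeriv_add hf hsum, shiftSubDeriv_sum _ _ hGe]
  simp only [Function.iterate_succ_apply']

end shiftSubDeriv

theorem iterate_shiftSubDeriv_eq_add_sum {A G : ℕ → ℕ → ℝ → ℝ} {k : ℕ}
    (hA : ∀ p < k, ∀ n, Differentiable ℝ (A p n)) (hG : ∀ p < k, ∀ n, ContDiff ℝ ∞ (G p n))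
    (hrec : ∀ p < k, shiftSubDeriv (A p) = A (p + 1) + G p) :
    shiftSubDeriv^[k] (A 0) = A k + ∑ i ∈ range k, shiftSubDeriv^[k - 1 - i] (G i) := by
  induction k with
  | zero => simp
  | succ k ih =>
    rw [Function.iterate_succ_apply', ih (fun p hp => hA p (by omega)) (fun p hp => hG p (by omega))
      (fun p hp => hrec p (by omega)), shiftSubDeriv_add_sum_iterate _ (hA k (by omega))
      (fun i hi => hG i (by have := mem_range.1 hi; omega)), hrec k (by omega), sum_range_succ,
      Nat.add_sub_cancel, Nat.sub_self, Function.iterate_zero, id, add_assoc, add_comm (G k)]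
    congr 2
    refine sum_congr rfl fun i hi => ?_
    congr 1
    have := mem_range.1 hi
    omega

theorem iterate_shiftSubDeriv_eq_sum {A G : ℕ → ℕ → ℝ → ℝ} {k : ℕ}
    (hA : ∀ p ≤ k, ∀ n, Differentiable ℝ (A p n)) (hG : ∀ p ≤ k, ∀ n, ContDiff ℝ ∞ (G p n))
    (hrec : ∀ p < k, shiftSubDeriv (A p) = A (p + 1) + G p)
    (hlast : shiftSubDeriv (A k) = G k) :
    shiftSubDeriv^[k + 1] (A 0) = ∑ i ∈ range (k + 1), shiftSubDeriv^[k - i] (G i) := by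
  rw [Function.iterate_succ_apply', iterate_shiftSubDeriv_eq_add_sum (fun p hp => hA p hp.le)
    (fun p hp => hG p hp.le) hrec, shiftSubDeriv_add_sum_iterate _ (hA k le_rfl)
    (fun i hi => hG i (mem_range.1 hi).le), hlast, sum_range_succ, Nat.sub_self,
    Function.iterate_zero, id, add_comm]
  congr 1
  refine sum_congr rfl fun i hi => ?_
  congr 1
  have := mem_range.1 hi
  omega

theorem sum_iterate_shiftSubDeriv_apply_eq_neg_sum_sum (m : ℕ) (g : ℕ → ℕ → ℝ → ℝ)
    (hg : ∀ i < m, ∀ n, ContDiff ℝ ∞ (g i n)) (n : ℕ) (x : ℝ) :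
    ∑ i ∈ range m, shiftSubDeriv^[m - 1 - i] (g i) n x
      = -∑ j ∈ range (m + 1), ∑ i ∈ range (m - j), (-1 : ℝ) ^ (j + i + m)
          * ((m - 1 - i).choose j : ℝ) * iteratedDeriv (m - 1 - i - j) (g i (n + j)) x := by
  rw [sum_comm' (t' := range m) (s' := fun i => range (m - i))
    (fun j i => by simp only [mem_range]; omega), ← sum_neg_distrib]
  refine sum_congr rfl fun i hi => ?_
  rw [mem_range] at hi
  rw [iterate_shiftSubDeriv_apply (hg i hi), ← sum_neg_distrib, show m - 1 - i + 1 = m - i by omega]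
  refine sum_congr rfl fun j hj => ?_
  rw [mem_range] at hj
  rw [neg_one_pow_congr (m := j + i + m) (n := m - 1 - i - j + 1)
    (by simp only [Nat.even_iff]; omega), pow_succ]
  ring

theorem iterate_shiftSubDeriv_eq_sum_of_recurrence {m : ℕ} (hm : 1 ≤ m) {b : ℕ → ℝ → ℝ}
    (hb : ∀ p ∈ Icc 1 m, ContDiff ℝ ∞ (b p)) {α : ℕ → ℕ → ℝ → ℝ}
    (hα : ∀ p ∈ Icc 1 m, ∀ n, ContDiff ℝ ∞ (α p n))
    (hrec : ∀ p, 1 ≤ p → p ≤ m - 1 → ∀ n, ∀ x : ℝ,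
      α p (n + 1) x = deriv (α p n) x + α (p + 1) n x + α 1 n x * b p x)
    (hrecm : ∀ n, ∀ x : ℝ, α m (n + 1) x = deriv (α m n) x + α 1 n x * b m x) :
    shiftSubDeriv^[m] (α 1)
      = ∑ i ∈ range m, shiftSubDeriv^[m - 1 - i] (fun n t => α 1 n t * b (1 + i) t) := by
  have := iterate_shiftSubDeriv_eq_sum (A := fun p => α (p + 1))
    (G := fun i n t => α 1 n t * b (1 + i) t) (k := m - 1)
    (fun p hp n => (hα (p + 1) (mem_Icc.2 ⟨by omega, by omega⟩) n).differentiable (by simp))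
    (fun p hp n => (hα 1 (mem_Icc.2 ⟨le_rfl, hm⟩) n).mul (hb _ (mem_Icc.2 ⟨by omega, by omega⟩)))
    (fun p hp => by
      funext n x
      simp only [shiftSubDeriv, Pi.sub_apply, Pi.add_apply, hrec (p + 1) (by omega) (by omega),
        add_comm 1 p]
      ring)
    (by
      funext n x
      simp only [shiftSubDeriv, Pi.sub_apply, Nat.sub_add_cancel hm, hrecm, Nat.add_sub_cancel' hm]
      ring)
  simpa only [Nat.sub_add_cancel hm, zero_add] using this

/-- Let `m ≥ 1` and `b₁, …, b_m` be smooth.  If a family of smooth functions `α_p(n)`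
(`1 ≤ p ≤ m`, `n ∈ ℕ`) satisfies `α_p(n+1) = (α_p(n))′ + α_{p+1}(n) + α₁(n)·b_p` for
`1 ≤ p ≤ m−1` and `α_m(n+1) = (α_m(n))′ + α₁(n)·b_m`, then the first coefficient satisfies
`∑_{i=0}^{m} (−1)^{i+m}·C(m,i)·(α₁(n+i))^{(m−i)}
 + ∑_{j=0}^{m} ∑_{i=0}^{m−1−j} (−1)^{j+i+m}·C(m−1−i, j)·(α₁(n+j)·b_{1+i})^{(m−1−i−j)} = 0`
(the inner sum being empty when `j = m`). -/
theorem statement19 (m : ℕ) (hm : 1 ≤ m) (b : ℕ → ℝ → ℝ)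
    (hb : ∀ p ∈ Finset.Icc 1 m, ContDiff ℝ (⊤ : ℕ∞) (b p))
    (α : ℕ → ℕ → ℝ → ℝ)
    (hα : ∀ p ∈ Finset.Icc 1 m, ∀ n, ContDiff ℝ (⊤ : ℕ∞) (α p n))
    (hrec : ∀ p, 1 ≤ p → p ≤ m - 1 → ∀ n, ∀ x : ℝ,
      α p (n + 1) x = deriv (α p n) x + α (p + 1) n x + α 1 n x * b p x)
    (hrecm : ∀ n, ∀ x : ℝ, α m (n + 1) x = deriv (α m n) x + α 1 n x * b m x)
    (n : ℕ) (x : ℝ) :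
    (∑ i ∈ Finset.range (m + 1),
        (-1 : ℝ) ^ (i + m) * (m.choose i : ℝ) * iteratedDeriv (m - i) (α 1 (n + i)) x)
      + (∑ j ∈ Finset.range (m + 1), ∑ i ∈ Finset.range (m - j),
          (-1 : ℝ) ^ (j + i + m) * (((m - 1 - i).choose j) : ℝ)
            * iteratedDeriv (m - 1 - i - j) (fun t => α 1 (n + j) t * b (1 + i) t) x)
      = 0 := by
  have hα1 : ∀ n, ContDiff ℝ ∞ (α 1 n) := hα 1 (mem_Icc.2 ⟨le_rfl, hm⟩)
  have hG : ∀ i < m, ∀ n, ContDiff ℝ ∞ (fun t => α 1 n t * b (1 + i) t) := fun i hi n =>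
    (hα1 n).mul (hb _ (mem_Icc.2 ⟨by omega, by omega⟩))
  have expand : ∑ i ∈ range (m + 1),
      (-1 : ℝ) ^ (i + m) * (m.choose i : ℝ) * iteratedDeriv (m - i) (α 1 (n + i)) x
        = shiftSubDeriv^[m] (α 1) n x := by
    rw [iterate_shiftSubDeriv_apply hα1]
    refine sum_congr rfl fun i hi => ?_
    rw [neg_one_pow_congr (m := i + m) (n := m - i)
      (by have := mem_range.1 hi; simp only [Nat.even_iff]; omega)]
    ring
  rw [expand, iterate_shiftSubDeriv_eq_sum_of_recurrence hm hb hα hrec hrecm, Finset.sum_apply,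
    Finset.sum_apply, sum_iterate_shiftSubDeriv_apply_eq_neg_sum_sum m _ hG]
  exact neg_add_cancel _
end
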